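/- arXiv:1911.01555 — 8 statements merged into one kernel-verified Lean document; each statement's English description precedes it below -/
import Mathlib

section
/- Let D be an orientation of a simple graph G on vertices v_1,…,v_n and let τ be the edge-coloring of G assigning to each arc (v_i, v_j) of D the color j on the edge v_iv_j. Then for every vertex v, the color degree of v in (G, τ) equals the out-degree of v in D if v has in-degree 0, and equals the out-degree of v plus 1 otherwise. -/
/-- For the signature `(D, τ)` of an orientation `D` of a simple graph `G`
(where the edge `v_i v_j` receives color `j` when `(v_i, v_j)` is an arc of `D`),
the color degree of a vertex `v` equals its out-degree if its in-degree is `0`,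
and its out-degree plus one otherwise. -/
theorem stmt_1 {n : ℕ} (G : SimpleGraph (Fin n)) (D : Fin n → Fin n → Prop)
    [DecidableRel D]
    (horient : ∀ i j, G.Adj i j ↔ (D i j ∨ D j i))
    (hasym : ∀ i j, D i j → ¬ D j i)
    (col : Fin n → Fin n → Fin n)
    (hcol : ∀ i j, col i j = if D i j then j else i)
    (v : Fin n) :
    ((col v) '' {u | G.Adj v u}).ncard =
      if {u | D u v}.ncard = 0 then {u | D v u}.ncard else {u | D v u}.ncard + 1 := by
  have hDvv : ¬ D v v := fun h => hasym v v h h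
  by_cases hin : {u | D u v} = ∅
  · have hinempty : ∀ u, ¬ D u v := fun u hu =>
      Set.eq_empty_iff_forall_notMem.mp hin u hu
    have himg : (col v) '' {u | G.Adj v u} = {u | D v u} := by
      ext x
      simp only [Set.mem_image, Set.mem_setOf_eq]
      constructor
      · rintro ⟨u, hu, rfl⟩
        rcases (horient v u).mp hu with h | h
        · rw [hcol v u, if_pos h]; exact h
        · exact absurd h (hinempty u)
      · intro hx
        exact ⟨x, (horient v x).mpr (Or.inl hx), by rw [hcol, if_pos hx]⟩
    rw [himg, hin, Set.ncard_empty, if_pos rfl]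
  · obtain ⟨w, hw⟩ := Set.nonempty_iff_ne_empty.mpr hin
    have hw : D w v := hw
    have himg : (col v) '' {u | G.Adj v u} = insert v {u | D v u} := by
      ext x
      simp only [Set.mem_image, Set.mem_setOf_eq, Set.mem_insert_iff]
      constructor
      · rintro ⟨u, hu, rfl⟩
        rcases (horient v u).mp hu with h | h
        · right; rw [hcol v u, if_pos h]; exact h
        · left; rw [hcol v u, if_neg (hasym u v h)]
      · rintro (hxv | hx)
        · exact ⟨w, (horient v w).mpr (Or.inr hw), by
            rw [hcol, if_neg (hasym w v hw)]; exact hxv.symm⟩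
        · exact ⟨x, (horient v x).mpr (Or.inl hx), by rw [hcol, if_pos hx]⟩
    rw [himg, Set.ncard_insert_of_notMem (show v ∉ {u | D v u} from hDvv) (Set.toFinite _),
      if_neg (fun h => hin ((Set.ncard_eq_zero (Set.toFinite _)).mp h))]
end

section
/- Let D be an orientation of a simple graph G on vertices v_1,…,v_n and let (D, τ) be its signature (edge v_iv_j gets color j when (v_i, v_j) is an arc of D). Then a cycle in G is a directed cycle in D if and only if it is a properly colored cycle in (D, τ). -/
/-- A cycle in `G` is a directed cycle in an orientation `D` of `G` if and only if it is a
properly colored cycle in the signature `(D, τ)`, where the edge `v_i v_j` gets color `j`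
when `(v_i, v_j)` is an arc of `D`. -/
theorem stmt_2 {n : ℕ} (G : SimpleGraph (Fin n)) (D : Fin n → Fin n → Prop)
    [DecidableRel D]
    (horient : ∀ i j, G.Adj i j ↔ (D i j ∨ D j i))
    (hasym : ∀ i j, D i j → ¬ D j i)
    (col : Fin n → Fin n → Fin n)
    (hcol : ∀ i j, col i j = if D i j then j else i)
    (m : ℕ) (hm : 3 ≤ m) (f : ZMod m → Fin n)
    (hinj : Function.Injective f)
    (hcyc : ∀ i, G.Adj (f i) (f (i + 1))) :
    ((∀ i, D (f i) (f (i + 1))) ∨ (∀ i, D (f (i + 1)) (f i))) ↔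
      (∀ i, col (f i) (f (i + 1)) ≠ col (f (i + 1)) (f (i + 2))) := by
  haveI : NeZero m := ⟨by omega⟩
  have hdir : ∀ i : ZMod m, D (f i) (f (i + 1)) ∨ D (f (i + 1)) (f i) :=
    fun i => (horient _ _).mp (hcyc i)
  -- small arithmetic facts in ZMod m
  have h10 : (1 : ZMod m) ≠ 0 := by
    have : ¬ ((1 : ℕ) : ZMod m) = ((0 : ℕ) : ZMod m) := by
      rw [ZMod.natCast_eq_natCast_iff', Nat.mod_eq_of_lt (by omega),
        Nat.mod_eq_of_lt (by omega)]
      omega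
    simpa using this
  have h12 : (1 : ZMod m) ≠ 2 := by
    have : ¬ ((1 : ℕ) : ZMod m) = ((2 : ℕ) : ZMod m) := by
      rw [ZMod.natCast_eq_natCast_iff', Nat.mod_eq_of_lt (by omega),
        Nat.mod_eq_of_lt (by omega)]
      omega
    simpa using this
  have hadd : ∀ i : ZMod m, i + 2 = i + 1 + 1 := fun i => by ring
  have hne1 : ∀ i : ZMod m, f i ≠ f (i + 1) := by
    intro i h
    have := hinj h
    exact h10 (by linear_combination -this)
  have hne12 : ∀ i : ZMod m, f (i + 1) ≠ f (i + 1 + 1) := by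
    intro i h
    have := hinj h
    exact h12 (by linear_combination this)
  -- the key step: a forward edge forces the next edge forward, given proper coloring
  constructor
  · rintro (hF | hB) i
    · rw [hcol, hcol, hadd i, if_pos (hF i), if_pos (hF (i + 1))]
      exact hne12 i
    · rw [hcol, hcol, hadd i, if_neg (hasym _ _ (hB i)), if_neg (hasym _ _ (hB (i + 1)))]
      exact hne1 i
  · intro hprop
    have step : ∀ i : ZMod m, D (f i) (f (i + 1)) → D (f (i + 1)) (f (i + 1 + 1)) := by
      intro i hi
      rcases hdir (i + 1) with h | h
      · exact h
      · exfalso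
        apply hprop i
        rw [hcol, hcol, hadd i, if_pos hi, if_neg (hasym _ _ h)]
    have reach : ∀ i : ZMod m, D (f i) (f (i + 1)) → ∀ j : ZMod m, D (f j) (f (j + 1)) := by
      intro i hi j
      have key : ∀ t : ℕ, D (f (i + (t : ZMod m))) (f (i + (t : ZMod m) + 1)) := by
        intro t
        induction t with
        | zero => simpa using hi
        | succ t ih =>
          have := step _ ih
          push_cast
          rw [show i + ((t : ZMod m) + 1) = i + (t : ZMod m) + 1 from by ring]
          exact this
      have := key (j - i).val
      rw [ZMod.natCast_val, ZMod.cast_id] at this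
      rwa [show i + (j - i) = j from by ring] at this
    by_cases h0 : D (f 0) (f (0 + 1))
    · exact Or.inl (reach 0 h0)
    · right
      intro i
      rcases hdir i with h | h
      · exact absurd (reach i h 0) h0
      · exact h
end

section
/- For all positive integers s and t, the dual graph Ĝ of an edge-colored graph G contains a rainbow copy of K_{s,t} (with one side inside V₁ and the other inside V₂) if and only if G contains a rainbow copy of K_{s,t}. -/
/-! A `V₁`–`V₂` edge `a⁽¹⁾b⁽²⁾` of `Ĝ` exists exactly when `ab` is an edge of `G`, and it carries
the colour of `ab`, so the two rainbow conditions coincide; the sides of a biclique in `G` are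
automatically disjoint because `G` has no loops. -/

/-- The bipartite dual graph `Ĝ` of a graph `G`. -/
def dualGraph {V : Type*} (G : SimpleGraph V) : SimpleGraph (V ⊕ V) where
  Adj a b := ∃ u w, G.Adj u w ∧
    ((a = Sum.inl u ∧ b = Sum.inr w) ∨ (a = Sum.inr w ∧ b = Sum.inl u))
  symm := by
    constructor
    rintro a b ⟨u, w, h, (⟨rfl, rfl⟩ | ⟨rfl, rfl⟩)⟩
    · exact ⟨u, w, h, Or.inr ⟨rfl, rfl⟩⟩
    · exact ⟨u, w, h, Or.inl ⟨rfl, rfl⟩⟩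
  loopless := by
    constructor
    rintro a ⟨u, w, h, (⟨rfl, h2⟩ | ⟨rfl, h2⟩)⟩ <;> simp at h2

theorem dualGraph_adj_inl_inr {V : Type*} {G : SimpleGraph V} {a b : V} :
    (dualGraph G).Adj (Sum.inl a) (Sum.inr b) ↔ G.Adj a b := by
  constructor
  · rintro ⟨u, w, h, ⟨hu, hw⟩ | ⟨hu, _⟩⟩
    · cases Sum.inl_injective hu
      cases Sum.inr_injective hw
      exact h
    · exact absurd hu Sum.inl_ne_inr
  · exact fun h => ⟨a, b, h, Or.inl ⟨rfl, rfl⟩⟩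

theorem SimpleGraph.disjoint_of_forall_adj {V : Type*} {G : SimpleGraph V} {A B : Finset V}
    (hadj : ∀ a ∈ A, ∀ b ∈ B, G.Adj a b) : Disjoint A B :=
  Finset.disjoint_left.2 fun x hxA hxB => G.irrefl (hadj x hxA x hxB)

theorem stmt_4_general {V C : Type*} (s t : ℕ)
    (G : SimpleGraph V) (c : V → V → C)
    (chat : (V ⊕ V) → (V ⊕ V) → C)
    (hchat : ∀ u w, chat (Sum.inl u) (Sum.inr w) = c u w ∧
      chat (Sum.inr w) (Sum.inl u) = c u w) :
    (∃ (A B : Finset V), A.card = s ∧ B.card = t ∧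
      (∀ a ∈ A, ∀ b ∈ B, (dualGraph G).Adj (Sum.inl a) (Sum.inr b)) ∧
      (∀ a ∈ A, ∀ b ∈ B, ∀ a' ∈ A, ∀ b' ∈ B, (a ≠ a' ∨ b ≠ b') →
        chat (Sum.inl a) (Sum.inr b) ≠ chat (Sum.inl a') (Sum.inr b'))) ↔
    (∃ (A B : Finset V), Disjoint A B ∧ A.card = s ∧ B.card = t ∧
      (∀ a ∈ A, ∀ b ∈ B, G.Adj a b) ∧
      (∀ a ∈ A, ∀ b ∈ B, ∀ a' ∈ A, ∀ b' ∈ B, (a ≠ a' ∨ b ≠ b') →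
        c a b ≠ c a' b')) := by
  simp only [dualGraph_adj_inl_inr, fun u w => (hchat u w).1]
  constructor
  · rintro ⟨A, B, hA, hB, hadj, hrainbow⟩
    exact ⟨A, B, G.disjoint_of_forall_adj hadj, hA, hB, hadj, hrainbow⟩
  · rintro ⟨A, B, -, hA, hB, hadj, hrainbow⟩
    exact ⟨A, B, hA, hB, hadj, hrainbow⟩

/-- The dual graph `Ĝ` contains a rainbow `K_{s,t}` (one side inside `V₁`, the other
inside `V₂`) if and only if `G` contains a rainbow `K_{s,t}`. -/
theorem stmt_4 {V C : Type*} (s t : ℕ) (hs : 0 < s) (ht : 0 < t)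
    (G : SimpleGraph V) (c : V → V → C) (hc : ∀ u v, c u v = c v u)
    (chat : (V ⊕ V) → (V ⊕ V) → C)
    (hchat : ∀ u w, chat (Sum.inl u) (Sum.inr w) = c u w ∧
      chat (Sum.inr w) (Sum.inl u) = c u w) :
    (∃ (A B : Finset V), A.card = s ∧ B.card = t ∧
      (∀ a ∈ A, ∀ b ∈ B, (dualGraph G).Adj (Sum.inl a) (Sum.inr b)) ∧
      (∀ a ∈ A, ∀ b ∈ B, ∀ a' ∈ A, ∀ b' ∈ B, (a ≠ a' ∨ b ≠ b') →
        chat (Sum.inl a) (Sum.inr b) ≠ chat (Sum.inl a') (Sum.inr b'))) ↔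
    (∃ (A B : Finset V), Disjoint A B ∧ A.card = s ∧ B.card = t ∧
      (∀ a ∈ A, ∀ b ∈ B, G.Adj a b) ∧
      (∀ a ∈ A, ∀ b ∈ B, ∀ a' ∈ A, ∀ b' ∈ B, (a ≠ a' ∨ b ≠ b') →
        c a b ≠ c a' b')) :=
  stmt_4_general s t G c chat hchat
end

section
/- For all positive integers s and t, every properly colored complete bipartite graph K_{s, t + s(t−1)(s−1)} with bipartition (A, B), where |A| = s, contains a rainbow complete bipartite subgraph K_{s,t} with bipartition (A, B′) for some subset B′ of B of size t. -/
/-- Every properly colored `K_{s, t + s(t-1)(s-1)}` with bipartition `(A, B)`, `|A| = s`,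
contains a rainbow `K_{s,t}` with bipartition `(A, B')` for some `B' ⊆ B` of size `t`. -/
theorem stmt_5 (s t : ℕ) (hs : 0 < s) (ht : 0 < t) {C : Type*}
    (c : Fin s → Fin (t + s * (t - 1) * (s - 1)) → C)
    (hproper1 : ∀ a, Function.Injective (c a))
    (hproper2 : ∀ b, Function.Injective (fun a => c a b)) :
    ∃ B' : Finset (Fin (t + s * (t - 1) * (s - 1))), B'.card = t ∧
      ∀ a a' : Fin s, ∀ b ∈ B', ∀ b' ∈ B', (a ≠ a' ∨ b ≠ b') → c a b ≠ c a' b' := by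
  classical
  let N := t + s * (t - 1) * (s - 1)
  suffices h : ∀ k, k ≤ t → ∃ B' : Finset (Fin N), B'.card = k ∧
      ∀ a a' : Fin s, ∀ b ∈ B', ∀ b' ∈ B', (a ≠ a' ∨ b ≠ b') → c a b ≠ c a' b' by
    exact h t le_rfl
  intro k
  induction k with
  | zero => exact fun _ => ⟨∅, rfl, by simp⟩
  | succ k ih =>
    intro hk
    obtain ⟨B', hcard, hrain⟩ := ih (Nat.le_of_succ_le hk)
    -- the set of bad vertices
    set Big : Finset (Fin N) := Finset.univ.biUnion (fun a : Fin s =>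
      (Finset.univ.erase a).biUnion (fun a' : Fin s =>
        B'.biUnion (fun b' => Finset.univ.filter (fun b => c a b = c a' b')))) with hBig
    set Bad : Finset (Fin N) := B' ∪ Big with hBad
    have hfilt : ∀ a a' : Fin s, ∀ b' : Fin N,
        (Finset.univ.filter (fun b => c a b = c a' b')).card ≤ 1 := by
      intro a a' b'
      apply Finset.card_le_one.mpr
      intro x hx y hy
      simp only [Finset.mem_filter] at hx hy
      exact hproper1 a (hx.2.trans hy.2.symm)
    have hBigcard : Big.card ≤ s * ((s - 1) * k) := by
      calc Big.card ≤ ∑ a : Fin s, ((Finset.univ.erase a).biUnion (fun a' : Fin s =>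
            B'.biUnion (fun b' => Finset.univ.filter (fun b => c a b = c a' b')))).card :=
          Finset.card_biUnion_le
        _ ≤ ∑ a : Fin s, (s - 1) * k := by
            apply Finset.sum_le_sum
            intro a _
            calc ((Finset.univ.erase a).biUnion (fun a' : Fin s =>
                  B'.biUnion (fun b' => Finset.univ.filter (fun b => c a b = c a' b')))).card
                ≤ ∑ a' ∈ Finset.univ.erase a,
                  (B'.biUnion (fun b' => Finset.univ.filter (fun b => c a b = c a' b'))).card :=
                Finset.card_biUnion_le
              _ ≤ ∑ _a' ∈ Finset.univ.erase a, k := by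
                  apply Finset.sum_le_sum
                  intro a' _
                  calc (B'.biUnion (fun b' =>
                        Finset.univ.filter (fun b => c a b = c a' b'))).card
                      ≤ ∑ b' ∈ B', (Finset.univ.filter (fun b => c a b = c a' b')).card :=
                      Finset.card_biUnion_le
                    _ ≤ ∑ _b' ∈ B', 1 := Finset.sum_le_sum (fun b' _ => hfilt a a' b')
                    _ = k := by rw [Finset.sum_const, smul_eq_mul, mul_one, hcard]
              _ = (s - 1) * k := by
                  rw [Finset.sum_const, smul_eq_mul,
                    Finset.card_erase_of_mem (Finset.mem_univ a), Finset.card_univ,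
                    Fintype.card_fin]
        _ = s * ((s - 1) * k) := by
            rw [Finset.sum_const, smul_eq_mul, Finset.card_univ, Fintype.card_fin]
    have hBadcard : Bad.card < N := by
      have h1 : Bad.card ≤ k + s * ((s - 1) * k) := by
        calc Bad.card ≤ B'.card + Big.card := Finset.card_union_le _ _
          _ ≤ k + s * ((s - 1) * k) := by rw [hcard]; exact Nat.add_le_add_left hBigcard k
      have hk1 : k ≤ t - 1 := Nat.le_pred_of_lt hk
      have h2 : s * ((s - 1) * k) ≤ s * (t - 1) * (s - 1) := by
        calc s * ((s - 1) * k) ≤ s * ((s - 1) * (t - 1)) :=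
            Nat.mul_le_mul_left s (Nat.mul_le_mul_left _ hk1)
          _ = s * (t - 1) * (s - 1) := by ring
      have h3 : k < t := hk
      omega
    obtain ⟨b0, hb0⟩ : ∃ b0, b0 ∉ Bad := by
      by_contra hcon
      push_neg at hcon
      have : Bad = Finset.univ := Finset.eq_univ_of_forall hcon
      rw [this, Finset.card_univ, Fintype.card_fin] at hBadcard
      omega
    have hb0B' : b0 ∉ B' := fun h => hb0 (Finset.mem_union_left _ h)
    have hb0Big : b0 ∉ Big := fun h => hb0 (Finset.mem_union_right _ h)
    -- key: b0 has no color conflict with B'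
    have hkey : ∀ a a' : Fin s, ∀ b' ∈ B', c a b0 ≠ c a' b' := by
      intro a a' b' hb' heq
      by_cases haa : a = a'
      · subst haa
        exact hb0B' ((hproper1 a heq) ▸ hb')
      · apply hb0Big
        rw [hBig]
        refine Finset.mem_biUnion.mpr ⟨a, Finset.mem_univ a, ?_⟩
        refine Finset.mem_biUnion.mpr ⟨a', Finset.mem_erase.mpr ⟨Ne.symm haa, Finset.mem_univ a'⟩, ?_⟩
        exact Finset.mem_biUnion.mpr ⟨b', hb', Finset.mem_filter.mpr ⟨Finset.mem_univ b0, heq⟩⟩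
    refine ⟨insert b0 B', ?_, ?_⟩
    · rw [Finset.card_insert_of_notMem hb0B', hcard]
    · intro a a' b hb b' hb' hne heq
      rcases Finset.mem_insert.mp hb with rfl | hbB
      · rcases Finset.mem_insert.mp hb' with rfl | hb'B
        · rcases hne with haa | hbb
          · exact haa (hproper2 _ heq)
          · exact hbb rfl
        · exact hkey a a' b' hb'B heq
      · rcases Finset.mem_insert.mp hb' with rfl | hb'B
        · exact hkey a' a b hbB heq.symm
        · exact hrain a a' b hbB b' hb'B hne heq
end

section
/- Let n, s, t be positive integers with 2 ≤ s ≤ t, and let G = (V₁, V₂; E) be an edge-colored bipartite graph with |V₂| = n₂ containing no properly colored K_{s,t}. Then G contains a spanning subgraph H such that d^c_H(u) ≥ d^c_G(u) − s·((t−1)/(s−1)!)^{1/s}·n₂^{1−1/s} for every u ∈ V₁, and d^c_H(v) ≤ s−1 for every v ∈ V₂. -/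
open Finset
open scoped Classical

namespace PCAux

variable {V₁ V₂ C : Type*} [Fintype V₁] [Fintype V₂] [Nonempty V₁]

variable (s : ℕ) (E' : V₁ → V₂ → Prop) (c : V₁ → V₂ → C)

/-- Columns still claimable for row `r` given current kept colors `K`. -/
noncomputable def rdegSet (K : V₂ → Finset C) (r : V₁) : Finset V₂ :=
  Finset.univ.filter (fun v => E' r v ∧ c r v ∉ K v ∧ (K v).card < s - 1)

noncomputable def rdeg (K : V₂ → Finset C) (r : V₁) : ℕ := (rdegSet s E' c K r).card

noncomputable def amax (K : V₂ → Finset C) : V₁ :=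
  (Finset.exists_max_image Finset.univ (rdeg s E' c K)
    ⟨Classical.arbitrary V₁, mem_univ _⟩).choose

lemma amax_spec (K : V₂ → Finset C) (r : V₁) :
    rdeg s E' c K r ≤ rdeg s E' c K (amax s E' c K) :=
  (Finset.exists_max_image Finset.univ (rdeg s E' c K)
    ⟨Classical.arbitrary V₁, mem_univ _⟩).choose_spec.2 r (mem_univ r)

noncomputable def step (K : V₂ → Finset C) : V₂ → Finset C := fun v =>
  if v ∈ rdegSet s E' c K (amax s E' c K) then insert (c (amax s E' c K) v) (K v) else K v

noncomputable def proc : ℕ → V₂ → Finset C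
  | 0 => fun _ => ∅
  | (n+1) => step s E' c (proc n)

lemma mem_rdegSet {K : V₂ → Finset C} {r v} :
    v ∈ rdegSet s E' c K r ↔ E' r v ∧ c r v ∉ K v ∧ (K v).card < s - 1 := by
  simp [rdegSet]

lemma subset_step (K : V₂ → Finset C) (v : V₂) : K v ⊆ step s E' c K v := by
  unfold step
  split
  · exact subset_insert _ _
  · exact Finset.Subset.refl _

lemma proc_mono {i j : ℕ} (h : i ≤ j) (v : V₂) : proc s E' c i v ⊆ proc s E' c j v := by
  induction j, h using Nat.le_induction with
  | base => exact Finset.Subset.refl _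
  | succ n hn ih => exact ih.trans (subset_step s E' c _ v)

lemma proc_card_le (i : ℕ) (v : V₂) : (proc s E' c i v).card ≤ s - 1 := by
  induction i with
  | zero => simp [proc]
  | succ n ih =>
    show (step s E' c (proc s E' c n) v).card ≤ s - 1
    unfold step
    split_ifs with h
    · have h3 := ((mem_rdegSet s E' c).1 h).2.2
      exact (card_insert_le _ _).trans h3
    · exact ih

noncomputable def totalK (i : ℕ) : ℕ := ∑ v, (proc s E' c i v).card

lemma totalK_zero : totalK s E' c 0 = 0 := by simp [totalK, proc]

lemma totalK_succ (i : ℕ) :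
    totalK s E' c (i+1)
      = totalK s E' c i + rdeg s E' c (proc s E' c i) (amax s E' c (proc s E' c i)) := by
  classical
  set K := proc s E' c i with hK
  set u := amax s E' c K with hu
  have hstep : ∀ v, (step s E' c K v).card
      = (K v).card + (if v ∈ rdegSet s E' c K u then 1 else 0) := by
    intro v
    unfold step
    rw [← hu]
    split_ifs with h
    · rw [card_insert_of_notMem ((mem_rdegSet s E' c).1 h).2.1]
    · simp
  have : totalK s E' c (i+1) = ∑ v, ((K v).card + (if v ∈ rdegSet s E' c K u then 1 else 0)) := by
    unfold totalK
    exact Finset.sum_congr rfl (fun v _ => hstep v)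
  rw [this, Finset.sum_add_distrib]
  congr 1
  rw [Finset.sum_ite_mem, Finset.univ_inter]
  simp [rdeg]

lemma totalK_le (i : ℕ) : totalK s E' c i ≤ (s - 1) * Fintype.card V₂ := by
  unfold totalK
  calc ∑ v, (proc s E' c i v).card ≤ ∑ _v : V₂, (s-1) :=
        Finset.sum_le_sum (fun v _ => proc_card_le s E' c i v)
    _ = (s-1) * Fintype.card V₂ := by
        rw [Finset.sum_const, Finset.card_univ, smul_eq_mul, mul_comm]

lemma sum_claims (k : ℕ) :
    ∑ j ∈ range k, rdeg s E' c (proc s E' c j) (amax s E' c (proc s E' c j))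
      = totalK s E' c k := by
  induction k with
  | zero => simp [totalK_zero]
  | succ n ih => rw [Finset.sum_range_succ, ih, totalK_succ]

lemma step_new {K : V₂ → Finset C} {v : V₂} {χ : C}
    (h1 : χ ∈ step s E' c K v) (h2 : χ ∉ K v) :
    E' (amax s E' c K) v ∧ c (amax s E' c K) v = χ := by
  unfold step at h1
  split_ifs at h1 with h
  · rcases mem_insert.1 h1 with rfl | hK
    · exact ⟨((mem_rdegSet s E' c).1 h).1, rfl⟩
    · exact absurd hK h2
  · exact absurd h1 h2

lemma exists_entry {j : ℕ} {v : V₂} {χ : C} (hj : χ ∈ proc s E' c j v) :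
    ∃ m, χ ∈ proc s E' c (m+1) v := by
  cases j with
  | zero => simp [proc] at hj
  | succ m => exact ⟨m, hj⟩

noncomputable def eTime (v : V₂) (χ : C) : ℕ :=
  if h : ∃ m, χ ∈ proc s E' c (m+1) v then Nat.find h else 0

noncomputable def claimant (v : V₂) (χ : C) : V₁ :=
  amax s E' c (proc s E' c (eTime s E' c v χ))

lemma claimant_spec {j : ℕ} {v : V₂} {χ : C} (hj : χ ∈ proc s E' c j v) :
    E' (claimant s E' c v χ) v ∧ c (claimant s E' c v χ) v = χ ∧ eTime s E' c v χ < j := by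
  have hex : ∃ m, χ ∈ proc s E' c (m+1) v := exists_entry s E' c hj
  have het : eTime s E' c v χ = Nat.find hex := dif_pos hex
  set m := Nat.find hex with hm
  have hfind : χ ∈ proc s E' c (m+1) v := Nat.find_spec hex
  have hnot : χ ∉ proc s E' c m v := by
    rcases Nat.eq_zero_or_pos m with h0 | hpos
    · rw [h0]; simp [proc]
    · intro hmem
      have h1 : m - 1 < Nat.find hex := by omega
      have h2 := Nat.find_min hex h1
      have h3 : m - 1 + 1 = m := by omega
      rw [h3] at h2
      exact h2 hmem
  have hcl := step_new s E' c (show χ ∈ step s E' c (proc s E' c m) v from hfind) hnot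
  have hlt : m < j := by
    by_contra hle
    push_neg at hle
    exact hnot (proc_mono s E' c hle v hj)
  refine ⟨?_, ?_, ?_⟩
  · unfold claimant; rw [het]; exact hcl.1
  · unfold claimant; rw [het]; exact hcl.2
  · rw [het]; exact hlt

/-- The set of claimants of the colors kept at `v` by time `j`. -/
noncomputable def Av (j : ℕ) (v : V₂) : Finset V₁ :=
  (proc s E' c j v).image (claimant s E' c v)

lemma Av_card {j : ℕ} {v : V₂} (h : (proc s E' c j v).card = s - 1) :
    (Av s E' c j v).card = s - 1 := by
  unfold Av
  rw [Finset.card_image_of_injOn, h]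
  intro χ hχ χ' hχ' heq
  have h1 := (claimant_spec s E' c hχ).2.1
  have h2 := (claimant_spec s E' c hχ').2.1
  rw [← h1, ← h2, heq]

lemma Av_subset (j : ℕ) (v : V₂) :
    Av s E' c j v ⊆ (range j).image (fun i => amax s E' c (proc s E' c i)) := by
  intro a ha
  rcases Finset.mem_image.1 ha with ⟨χ, hχ, rfl⟩
  have hsp := (claimant_spec s E' c hχ).2.2
  exact Finset.mem_image.2 ⟨eTime s E' c v χ, Finset.mem_range.2 hsp, rfl⟩

lemma mem_Av {j : ℕ} {v : V₂} {a : V₁} (ha : a ∈ Av s E' c j v) :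
    E' a v ∧ c a v ∈ proc s E' c j v := by
  rcases Finset.mem_image.1 ha with ⟨χ, hχ, rfl⟩
  have hsp := claimant_spec s E' c hχ
  exact ⟨hsp.1, by rw [hsp.2.1]; exact hχ⟩

/-- The set of columns whose color (at row `r`) was not kept by time `N`. -/
noncomputable def lostSet (N : ℕ) (r : V₁) : Finset V₂ :=
  Finset.univ.filter (fun v => E' r v ∧ c r v ∉ proc s E' c N v)

lemma mem_lostSet {N : ℕ} {r : V₁} {v : V₂} :
    v ∈ lostSet s E' c N r ↔ E' r v ∧ c r v ∉ proc s E' c N v := by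
  simp [lostSet]

lemma lostSet_card_le (N : ℕ) (r : V₁) : (lostSet s E' c N r).card ≤ Fintype.card V₂ := by
  unfold lostSet
  exact (Finset.card_filter_le _ _).trans (le_of_eq Finset.card_univ)

end PCAux

namespace PCAux

variable {V₁ V₂ C : Type*} [Fintype V₁] [Fintype V₂] [Nonempty V₁]
variable (s t : ℕ) (E : V₁ → V₂ → Prop) (E' : V₁ → V₂ → Prop) (c : V₁ → V₂ → C)

/-- Pigeonhole: the number of columns that are "full at time j" and lost (at time `N`) by row `r`
is at most `(t-1) * j.choose (s-1)`; otherwise `t` of them share the same claimant set,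
yielding a properly colored `K_{s,t}`. -/
lemma full_lost_card_le
    (hs : 2 ≤ s) (hst : s ≤ t)
    (hinj : ∀ u v v', E' u v → E' u v' → c u v = c u v' → v = v')
    (hE : ∀ u v, E' u v → E u v)
    (hno : ¬ ∃ (A : Finset V₁) (B : Finset V₂),
      ((A.card = s ∧ B.card = t) ∨ (A.card = t ∧ B.card = s)) ∧
      (∀ a ∈ A, ∀ b ∈ B, E a b) ∧
      (∀ a ∈ A, ∀ b ∈ B, ∀ b' ∈ B, b ≠ b' → c a b ≠ c a b') ∧
      (∀ b ∈ B, ∀ a ∈ A, ∀ a' ∈ A, a ≠ a' → c a b ≠ c a' b))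
    (r : V₁) {N j : ℕ} (hjN : j ≤ N) :
    (Finset.univ.filter (fun v => E' r v ∧ c r v ∉ proc s E' c N v ∧
        (proc s E' c j v).card = s - 1)).card ≤ (t-1) * j.choose (s-1) := by
  classical
  by_contra hlt
  push_neg at hlt
  set S := Finset.univ.filter (fun v => E' r v ∧ c r v ∉ proc s E' c N v ∧
      (proc s E' c j v).card = s - 1) with hS
  set P := (range j).image (fun i => amax s E' c (proc s E' c i)) with hP
  set T := P.powersetCard (s-1) with hT
  have hmaps : ∀ v ∈ S, Av s E' c j v ∈ T := by
    intro v hv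
    have hfull : (proc s E' c j v).card = s - 1 := (Finset.mem_filter.1 hv).2.2.2
    exact Finset.mem_powersetCard.2 ⟨Av_subset s E' c j v, Av_card s E' c hfull⟩
  have hTcard : T.card ≤ j.choose (s-1) := by
    rw [hT, Finset.card_powersetCard]
    exact Nat.choose_le_choose _ ((Finset.card_image_le).trans (by rw [Finset.card_range]))
  have hcard : T.card * (t-1) < S.card :=
    lt_of_le_of_lt (Nat.mul_le_mul_right _ hTcard) (by rw [mul_comm]; exact hlt)
  obtain ⟨A₀, hA₀T, hfib⟩ :=
    Finset.exists_lt_card_fiber_of_mul_lt_card_of_maps_to hmaps hcard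
  have htle : t ≤ (S.filter fun v => Av s E' c j v = A₀).card := by omega
  obtain ⟨B, hBsub, hBcard⟩ := Finset.exists_subset_card_eq htle
  -- facts about members of B
  have hBfacts : ∀ b ∈ B, (E' r b ∧ c r b ∉ proc s E' c N b ∧
      (proc s E' c j b).card = s - 1) ∧ Av s E' c j b = A₀ := by
    intro b hb
    have := hBsub hb
    rw [Finset.mem_filter] at this
    exact ⟨(Finset.mem_filter.1 this.1).2, this.2⟩
  -- B is nonempty
  obtain ⟨b₀, hb₀⟩ : B.Nonempty := Finset.card_pos.1 (by omega)
  have hrA₀ : r ∉ A₀ := by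
    intro hr
    have h1 := hBfacts b₀ hb₀
    rw [← h1.2] at hr
    have h2 := mem_Av s E' c hr
    exact h1.1.2.1 (proc_mono s E' c hjN b₀ h2.2)
  set A : Finset V₁ := insert r A₀ with hA
  have hA₀card : A₀.card = s - 1 := (Finset.mem_powersetCard.1 hA₀T).2
  have hAcard : A.card = s := by
    rw [hA, Finset.card_insert_of_notMem hrA₀, hA₀card]; omega
  -- adjacency (in E')
  have hadj' : ∀ a ∈ A, ∀ b ∈ B, E' a b := by
    intro a ha b hb
    rcases Finset.mem_insert.1 ha with rfl | haA₀
    · exact (hBfacts b hb).1.1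
    · have : a ∈ Av s E' c j b := by rw [(hBfacts b hb).2]; exact haA₀
      exact (mem_Av s E' c this).1
  refine hno ⟨A, B, Or.inl ⟨hAcard, hBcard⟩, ?_, ?_, ?_⟩
  · exact fun a ha b hb => hE a b (hadj' a ha b hb)
  · intro a ha b hb b' hb' hne hcc
    exact hne (hinj a b b' (hadj' a ha b hb) (hadj' a ha b' hb') hcc)
  · intro b hb a ha a' ha' hne hcc
    rcases Finset.mem_insert.1 ha with rfl | haA₀ <;>
      rcases Finset.mem_insert.1 ha' with rfl | ha'A₀
    · exact hne rfl
    · -- a = r, a' ∈ A₀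
      have : a' ∈ Av s E' c j b := by rw [(hBfacts b hb).2]; exact ha'A₀
      have h2 := (mem_Av s E' c this).2
      rw [← hcc] at h2
      exact (hBfacts b hb).1.2.1 (proc_mono s E' c hjN b h2)
    · -- a ∈ A₀, a' = r
      have : a ∈ Av s E' c j b := by rw [(hBfacts b hb).2]; exact haA₀
      have h2 := (mem_Av s E' c this).2
      rw [hcc] at h2
      exact (hBfacts b hb).1.2.1 (proc_mono s E' c hjN b h2)
    · -- both in A₀ = Av j b
      have hmem : a ∈ Av s E' c j b := by rw [(hBfacts b hb).2]; exact haA₀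
      have hmem' : a' ∈ Av s E' c j b := by rw [(hBfacts b hb).2]; exact ha'A₀
      rcases Finset.mem_image.1 hmem with ⟨χ, hχ, rfl⟩
      rcases Finset.mem_image.1 hmem' with ⟨χ', hχ', rfl⟩
      have e1 := (claimant_spec s E' c hχ).2.1
      have e2 := (claimant_spec s E' c hχ').2.1
      apply hne
      congr 1
      rw [← e1, ← e2, hcc]

end PCAux

namespace PCAux

/-- Hockey stick identity, range version. -/
lemma hockey (p : ℕ) : ∀ k : ℕ, ∑ j ∈ range k, j.choose p = k.choose (p+1)
  | 0 => by simp
  | (k+1) => by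
      rw [Finset.sum_range_succ, hockey p k, Nat.choose_succ_succ]
      simp only [Nat.succ_eq_add_one]
      omega

/-- Lower bound for binomial coefficients. -/
lemma choose_lb (q : ℕ) : ∀ m : ℕ, m + 1 ≤ (m + (q+1)).choose (q+1)
  | 0 => by simp
  | (m+1) => by
      have h1 : (m + 1) + (q + 1) = (m + (q+1)) + 1 := by omega
      rw [h1, Nat.choose_succ_succ]
      simp only [Nat.succ_eq_add_one]
      have h2 := choose_lb q m
      have h3 : 0 < (m + (q+1)).choose q :=
        Nat.choose_pos (by omega)
      omega

variable {V₁ V₂ C : Type*} [Fintype V₁] [Fintype V₂] [Nonempty V₁]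
variable (s t : ℕ) (E : V₁ → V₂ → Prop) (E' : V₁ → V₂ → Prop) (c : V₁ → V₂ → C)

/-- The key counting bound for the loss of a row `r`. -/
lemma key_bound
    (hs : 2 ≤ s) (hst : s ≤ t)
    (hinj : ∀ u v v', E' u v → E' u v' → c u v = c u v' → v = v')
    (hE : ∀ u v, E' u v → E u v)
    (hno : ¬ ∃ (A : Finset V₁) (B : Finset V₂),
      ((A.card = s ∧ B.card = t) ∨ (A.card = t ∧ B.card = s)) ∧
      (∀ a ∈ A, ∀ b ∈ B, E a b) ∧
      (∀ a ∈ A, ∀ b ∈ B, ∀ b' ∈ B, b ≠ b' → c a b ≠ c a b') ∧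
      (∀ b ∈ B, ∀ a ∈ A, ∀ a' ∈ A, a ≠ a' → c a b ≠ c a' b))
    (r : V₁) :
    (s-1).factorial * ((lostSet s E' c (Fintype.card V₂ + s) r).card)^s
      ≤ (t-1) * (s * Fintype.card V₂)^(s-1) := by
  classical
  set n₂ := Fintype.card V₂ with hn₂
  set N := n₂ + s with hN
  set L := (lostSet s E' c N r).card with hL
  rcases Nat.eq_zero_or_pos L with h0 | hLpos
  · rw [h0, zero_pow (by omega : s ≠ 0), Nat.mul_zero]
    exact Nat.zero_le _
  have ht1 : 1 ≤ t - 1 := by omega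
  have hLn₂ : L ≤ n₂ := by
    rw [hL, hn₂]
    exact lostSet_card_le s E' c N r
  -- existence of k
  obtain ⟨q, hq⟩ : ∃ q, s - 1 = q + 1 := ⟨s - 2, by omega⟩
  have hw : L ≤ (t-1) * (((L-1) + (s-1)).choose (s-1)) := by
    have h1 := choose_lb q (L-1)
    rw [← hq] at h1
    have hL1 : L - 1 + 1 = L := by omega
    rw [hL1] at h1
    calc L ≤ ((L-1) + (s-1)).choose (s-1) := h1
      _ ≤ (t-1) * ((L-1) + (s-1)).choose (s-1) := Nat.le_mul_of_pos_left _ (by omega)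
  have hex : ∃ k : ℕ, L ≤ (t-1) * (k.choose (s-1)) := ⟨_, hw⟩
  set k := Nat.find hex with hk
  have hkspec : L ≤ (t-1) * (k.choose (s-1)) := Nat.find_spec hex
  have hkmin : ∀ j < k, (t-1) * (j.choose (s-1)) < L := by
    intro j hj
    have := Nat.find_min hex hj
    omega
  have hk1 : 1 ≤ k := by
    rcases Nat.eq_zero_or_pos k with h0 | h
    · exfalso
      have : (0:ℕ).choose (s-1) = 0 := Nat.choose_eq_zero_of_lt (by omega)
      rw [h0, this, Nat.mul_zero] at hkspec
      omega
    · exact h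
  have hkle : k ≤ L + s := by
    have h : k ≤ (L-1) + (s-1) := Nat.find_le hw
    omega
  -- per-step inequality
  have hstep : ∀ j, j < k →
      L ≤ rdeg s E' c (proc s E' c j) (amax s E' c (proc s E' c j))
          + (t-1) * (j.choose (s-1)) := by
    intro j hj
    have hjN : j ≤ N := by omega
    set S₂ := Finset.univ.filter (fun v => E' r v ∧ c r v ∉ proc s E' c N v ∧
        (proc s E' c j v).card = s - 1) with hS₂
    have hsplit : lostSet s E' c N r
        ⊆ rdegSet s E' c (proc s E' c j) r ∪ S₂ := by
      intro v hv
      rw [mem_lostSet] at hv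
      obtain ⟨hE'v, hnotin⟩ := hv
      have hnotj : c r v ∉ proc s E' c j v := fun hmem => hnotin (proc_mono s E' c hjN v hmem)
      rcases lt_or_ge ((proc s E' c j v).card) (s-1) with hltc | hge
      · exact Finset.mem_union_left _ ((mem_rdegSet s E' c).2 ⟨hE'v, hnotj, hltc⟩)
      · have heq : (proc s E' c j v).card = s - 1 :=
          le_antisymm (proc_card_le s E' c j v) hge
        exact Finset.mem_union_right _
          (Finset.mem_filter.2 ⟨Finset.mem_univ _, hE'v, hnotin, heq⟩)
    have h1 : L ≤ rdeg s E' c (proc s E' c j) r + S₂.card := by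
      rw [hL]
      calc (lostSet s E' c N r).card
            ≤ (rdegSet s E' c (proc s E' c j) r ∪ S₂).card := Finset.card_le_card hsplit
        _ ≤ _ := Finset.card_union_le _ _
    have h2 : S₂.card ≤ (t-1) * (j.choose (s-1)) :=
      full_lost_card_le s t E E' c hs hst hinj hE hno r hjN
    have h3 := amax_spec s E' c (proc s E' c j) r
    omega
  -- summation
  have hsum : k * L ≤ totalK s E' c k + (t-1) * (k.choose s) := by
    have hss : (s-1) + 1 = s := by omega
    calc k * L = ∑ _j ∈ range k, L := by
          rw [Finset.sum_const, Finset.card_range, smul_eq_mul]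
      _ ≤ ∑ j ∈ range k, (rdeg s E' c (proc s E' c j) (amax s E' c (proc s E' c j))
            + (t-1) * (j.choose (s-1))) :=
          Finset.sum_le_sum (fun j hj => hstep j (Finset.mem_range.1 hj))
      _ = (∑ j ∈ range k, rdeg s E' c (proc s E' c j) (amax s E' c (proc s E' c j)))
            + ∑ j ∈ range k, (t-1) * (j.choose (s-1)) := Finset.sum_add_distrib
      _ = totalK s E' c k + (t-1) * ∑ j ∈ range k, (j.choose (s-1)) := by
          rw [sum_claims, ← Finset.mul_sum]
      _ = totalK s E' c k + (t-1) * (k.choose s) := by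
          rw [hockey (s-1) k, hss]
  -- cancel to get k*L ≤ s*n₂
  have hid : k * ((k-1).choose (s-1)) = (k.choose s) * s := by
    have h := Nat.add_one_mul_choose_eq (k-1) (s-1)
    have h1 : k - 1 + 1 = k := by omega
    have h2 : s - 1 + 1 = s := by omega
    simpa [Nat.succ_eq_add_one, h1, h2] using h
  have hCk1 : (t-1) * ((k-1).choose (s-1)) ≤ L := le_of_lt (hkmin (k-1) (by omega))
  have hkL : k * L ≤ s * n₂ := by
    have htot := totalK_le s E' c k
    have hA : s * (k * L) ≤ s * totalK s E' c k + (t-1) * (k * ((k-1).choose (s-1))) := by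
      calc s * (k*L) ≤ s * (totalK s E' c k + (t-1)*(k.choose s)) :=
            Nat.mul_le_mul_left _ hsum
        _ = s * totalK s E' c k + (t-1) * ((k.choose s) * s) := by ring
        _ = s * totalK s E' c k + (t-1) * (k * ((k-1).choose (s-1))) := by rw [hid]
    have hB : (t-1) * (k * ((k-1).choose (s-1))) ≤ k * L := by
      calc (t-1) * (k * ((k-1).choose (s-1)))
          = k * ((t-1) * ((k-1).choose (s-1))) := by ring
        _ ≤ k * L := Nat.mul_le_mul_left _ hCk1
    have htot2 : s * totalK s E' c k ≤ s * ((s-1) * n₂) := Nat.mul_le_mul_left _ htot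
    have hC : s * (k*L) ≤ s * ((s-1) * n₂) + k * L := le_trans hA (by
      exact Nat.add_le_add htot2 hB)
    have hE1 : (s-1) * (k*L) + (k*L) = s * (k*L) := by
      have hss : (s-1) + 1 = s := by omega
      calc (s-1)*(k*L) + (k*L) = ((s-1)+1) * (k*L) := by ring
        _ = s * (k*L) := by rw [hss]
    have h5 : (s-1) * (k*L) ≤ s * ((s-1) * n₂) := by
      rw [← hE1] at hC
      exact le_of_add_le_add_right hC
    have h6 : (s-1) * (k*L) ≤ (s-1) * (s * n₂) := by
      calc (s-1) * (k*L) ≤ s * ((s-1) * n₂) := h5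
        _ = (s-1) * (s * n₂) := by ring
    exact Nat.le_of_mul_le_mul_left h6 (by omega)
  -- final assembly
  have hfact : (s-1).factorial * (k.choose (s-1)) ≤ k^(s-1) := by
    have h1 : k.descFactorial (s-1) = (s-1).factorial * (k.choose (s-1)) :=
      Nat.descFactorial_eq_factorial_mul_choose k (s-1)
    rw [← h1]
    exact Nat.descFactorial_le_pow k (s-1)
  have hpow : L^s = L^(s-1) * L := by
    conv_lhs => rw [show s = (s-1)+1 by omega]
    rw [pow_succ]
  calc (s-1).factorial * L^s = (s-1).factorial * (L^(s-1) * L) := by rw [hpow]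
    _ = ((s-1).factorial * L) * L^(s-1) := by ring
    _ ≤ ((s-1).factorial * ((t-1) * (k.choose (s-1)))) * L^(s-1) :=
        Nat.mul_le_mul_right _ (Nat.mul_le_mul_left _ hkspec)
    _ = (t-1) * (((s-1).factorial * (k.choose (s-1))) * L^(s-1)) := by ring
    _ ≤ (t-1) * (k^(s-1) * L^(s-1)) :=
        Nat.mul_le_mul_left _ (Nat.mul_le_mul_right _ hfact)
    _ = (t-1) * (k*L)^(s-1) := by rw [mul_pow]
    _ ≤ (t-1) * (s*n₂)^(s-1) := Nat.mul_le_mul_left _ (Nat.pow_le_pow_left hkL _)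

end PCAux

namespace PCAux

lemma real_bound (s t n₂ L : ℕ) (hs : 2 ≤ s) (hst : s ≤ t)
    (h : (s-1).factorial * L^s ≤ (t-1) * (s*n₂)^(s-1)) :
    (L : ℝ) ≤ (s : ℝ) * (((t : ℝ) - 1) / ((s-1).factorial : ℝ)) ^ ((1 : ℝ) / s) *
      (n₂ : ℝ) ^ (1 - 1 / (s : ℝ)) := by
  have hS0 : (0:ℝ) < (s:ℝ) := by
    have : 0 < s := by omega
    exact_mod_cast this
  have hS1 : (1:ℝ) ≤ (s:ℝ) := by
    have : 1 ≤ s := by omega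
    exact_mod_cast this
  have hSne : (s:ℝ) ≠ 0 := ne_of_gt hS0
  have hF0 : (0:ℝ) < ((s-1).factorial : ℝ) := by exact_mod_cast (s-1).factorial_pos
  have ht1 : (1:ℕ) ≤ t := by omega
  have hT : ((t:ℝ) - 1) = ((t-1 : ℕ) : ℝ) := by
    rw [Nat.cast_sub ht1]; norm_num
  set a : ℝ := (L:ℝ) with ha
  have ha0 : (0:ℝ) ≤ a := Nat.cast_nonneg L
  have hcast : ((s-1).factorial : ℝ) * a^s ≤ ((t-1:ℕ):ℝ) * (((s:ℝ) * (n₂:ℝ))^(s-1)) := by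
    rw [ha]
    exact_mod_cast h
  set R : ℝ := ((((t-1:ℕ)):ℝ) / ((s-1).factorial : ℝ)) * (((s:ℝ) * (n₂:ℝ))^(s-1)) with hR
  have hales : a^s ≤ R := by
    rw [hR, div_mul_eq_mul_div, le_div_iff₀ hF0]
    calc a^s * ((s-1).factorial : ℝ) = ((s-1).factorial : ℝ) * a^s := by ring
      _ ≤ _ := hcast
  have hane : a = (a^s) ^ ((1:ℝ)/(s:ℝ)) := by
    rw [← Real.rpow_natCast a s, ← Real.rpow_mul ha0]
    rw [mul_one_div, div_self hSne, Real.rpow_one]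
  have hmono : (a^s) ^ ((1:ℝ)/(s:ℝ)) ≤ R ^ ((1:ℝ)/(s:ℝ)) :=
    Real.rpow_le_rpow (pow_nonneg ha0 s) hales (by positivity)
  have hSN0 : (0:ℝ) ≤ (s:ℝ)*(n₂:ℝ) := by positivity
  have hTF0 : (0:ℝ) ≤ ((t-1:ℕ):ℝ) / ((s-1).factorial : ℝ) := by positivity
  have hs1cast : ((s-1:ℕ):ℝ) = (s:ℝ) - 1 := by
    rw [Nat.cast_sub (by omega : (1:ℕ) ≤ s)]; norm_num
  have hexp : ((s:ℝ)-1) * ((1:ℝ)/(s:ℝ)) = 1 - 1/(s:ℝ) := by field_simp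
  have hsplit : R ^ ((1:ℝ)/(s:ℝ))
      = (((t-1:ℕ):ℝ) / ((s-1).factorial : ℝ)) ^ ((1:ℝ)/(s:ℝ))
        * (((s:ℝ)*(n₂:ℝ)) ^ ((1:ℝ) - 1/(s:ℝ))) := by
    rw [hR, Real.mul_rpow hTF0 (pow_nonneg hSN0 _)]
    congr 1
    rw [← Real.rpow_natCast ((s:ℝ)*(n₂:ℝ)) (s-1), ← Real.rpow_mul hSN0, hs1cast, hexp]
  have hSsplit : ((s:ℝ)*(n₂:ℝ)) ^ ((1:ℝ) - 1/(s:ℝ))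
      = (s:ℝ) ^ ((1:ℝ) - 1/(s:ℝ)) * (n₂:ℝ) ^ ((1:ℝ) - 1/(s:ℝ)) :=
    Real.mul_rpow (le_of_lt hS0) (Nat.cast_nonneg _)
  have hSpowLe : (s:ℝ) ^ ((1:ℝ) - 1/(s:ℝ)) ≤ (s:ℝ) := by
    have h01 : (0:ℝ) ≤ 1/(s:ℝ) := by positivity
    calc (s:ℝ) ^ ((1:ℝ) - 1/(s:ℝ)) ≤ (s:ℝ) ^ ((1:ℝ)) :=
        Real.rpow_le_rpow_of_exponent_le hS1 (by linarith)
      _ = (s:ℝ) := Real.rpow_one _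
  have hfinal : a ≤ (((t-1:ℕ):ℝ) / ((s-1).factorial : ℝ)) ^ ((1:ℝ)/(s:ℝ))
      * ((s:ℝ) * ((n₂:ℝ) ^ ((1:ℝ) - 1/(s:ℝ)))) := by
    calc a = (a^s) ^ ((1:ℝ)/(s:ℝ)) := hane
      _ ≤ R ^ ((1:ℝ)/(s:ℝ)) := hmono
      _ = (((t-1:ℕ):ℝ) / ((s-1).factorial : ℝ)) ^ ((1:ℝ)/(s:ℝ))
            * (((s:ℝ)*(n₂:ℝ)) ^ ((1:ℝ) - 1/(s:ℝ))) := hsplit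
      _ = (((t-1:ℕ):ℝ) / ((s-1).factorial : ℝ)) ^ ((1:ℝ)/(s:ℝ))
            * ((s:ℝ) ^ ((1:ℝ) - 1/(s:ℝ)) * (n₂:ℝ) ^ ((1:ℝ) - 1/(s:ℝ))) := by rw [hSsplit]
      _ ≤ _ := by
          apply mul_le_mul_of_nonneg_left _ (by positivity)
          exact mul_le_mul_of_nonneg_right hSpowLe (Real.rpow_nonneg (Nat.cast_nonneg _) _)
  calc (L:ℝ) = a := rfl
    _ ≤ _ := hfinal
    _ = (s : ℝ) * (((t-1:ℕ):ℝ) / ((s-1).factorial : ℝ)) ^ ((1:ℝ)/(s:ℝ))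
          * (n₂:ℝ) ^ (1 - 1/(s:ℝ)) := by ring
    _ = _ := by rw [← hT]

end PCAux

/-- Structural lemma: an edge-colored bipartite graph `G = (V₁, V₂; E)` with `|V₂| = n₂` and
no properly colored `K_{s,t}` (`2 ≤ s ≤ t`) contains a spanning subgraph `H` with
`d^c_H(u) ≥ d^c_G(u) - s·((t-1)/(s-1)!)^{1/s}·n₂^{1-1/s}` for every `u ∈ V₁` and
`d^c_H(v) ≤ s - 1` for every `v ∈ V₂`. -/
theorem stmt_11 {V₁ V₂ C : Type*} [Fintype V₁] [Fintype V₂]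
    (s t : ℕ) (hs : 2 ≤ s) (hst : s ≤ t)
    (E : V₁ → V₂ → Prop) (c : V₁ → V₂ → C)
    (hno : ¬ ∃ (A : Finset V₁) (B : Finset V₂),
      ((A.card = s ∧ B.card = t) ∨ (A.card = t ∧ B.card = s)) ∧
      (∀ a ∈ A, ∀ b ∈ B, E a b) ∧
      (∀ a ∈ A, ∀ b ∈ B, ∀ b' ∈ B, b ≠ b' → c a b ≠ c a b') ∧
      (∀ b ∈ B, ∀ a ∈ A, ∀ a' ∈ A, a ≠ a' → c a b ≠ c a' b)) :
    ∃ H : V₁ → V₂ → Prop,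
      (∀ u v, H u v → E u v) ∧
      (∀ u : V₁, (((fun v => c u v) '' {v | E u v}).ncard : ℝ) -
          (s : ℝ) * (((t : ℝ) - 1) / (Nat.factorial (s - 1))) ^ ((1 : ℝ) / s) *
            (Fintype.card V₂ : ℝ) ^ (1 - 1 / (s : ℝ)) ≤
        (((fun v => c u v) '' {v | H u v}).ncard : ℝ)) ∧
      (∀ v : V₂, ((fun u => c u v) '' {u | H u v}).ncard ≤ s - 1) := by
  rcases isEmpty_or_nonempty V₁ with hV₁ | hV₁
  · refine ⟨fun _ _ => False, fun u v h => h.elim, fun u => (hV₁.false u).elim, fun v => ?_⟩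
    simp
  rcases isEmpty_or_nonempty V₂ with hV₂ | hV₂
  · refine ⟨fun _ _ => False, fun u v h => h.elim, fun u => ?_, fun v => (hV₂.false v).elim⟩
    have h1 : {v : V₂ | E u v} = ∅ := Subsingleton.elim _ _
    have h2 : {v : V₂ | False} = ∅ := by simp
    rw [h1, h2, Set.image_empty, Set.ncard_empty]
    have hcard : (Fintype.card V₂ : ℝ) = 0 := by
      haveI := hV₂
      simp
    have hne : (1 : ℝ) - 1 / (s:ℝ) ≠ 0 := by
      have hs2 : (2:ℝ) ≤ (s:ℝ) := by exact_mod_cast hs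
      have : 1 / (s:ℝ) ≤ 1/2 := by
        apply div_le_div_of_nonneg_left <;> linarith
      linarith
    rw [hcard, Real.zero_rpow hne]
    simp
  -- main case
  set e : V₂ ≃ Fin (Fintype.card V₂) := Fintype.equivFin V₂ with he
  set E' : V₁ → V₂ → Prop :=
    fun u v => E u v ∧ ∀ v', E u v' → c u v' = c u v → (e v : ℕ) ≤ (e v' : ℕ) with hE'def
  have hE : ∀ u v, E' u v → E u v := fun u v h => h.1
  have hinj : ∀ u v v', E' u v → E' u v' → c u v = c u v' → v = v' := by
    intro u v v' h1 h2 hc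
    have ha := h1.2 v' h2.1 hc.symm
    have hb := h2.2 v h1.1 hc
    exact e.injective (Fin.ext (le_antisymm ha hb))
  have hcolors : ∀ u, (fun v => c u v) '' {v | E u v} = (fun v => c u v) '' {v | E' u v} := by
    intro u
    apply Set.Subset.antisymm
    · rintro χ ⟨v, hv, rfl⟩
      have hWne : (Finset.univ.filter (fun v' => E u v' ∧ c u v' = c u v)).Nonempty :=
        ⟨v, Finset.mem_filter.2 ⟨Finset.mem_univ _, hv, rfl⟩⟩
      obtain ⟨v₀, hv₀W, hmin⟩ :=
        Finset.exists_min_image _ (fun v' => ((e v' : Fin _) : ℕ)) hWne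
      rw [Finset.mem_filter] at hv₀W
      refine ⟨v₀, ⟨hv₀W.2.1, ?_⟩, hv₀W.2.2⟩
      intro v' hEv' hcv'
      exact hmin v' (Finset.mem_filter.2 ⟨Finset.mem_univ _, hEv', by rw [hcv', hv₀W.2.2]⟩)
    · rintro χ ⟨v, hv, rfl⟩
      exact ⟨v, hv.1, rfl⟩
  refine ⟨fun u v => E' u v ∧ c u v ∈ PCAux.proc s E' c (Fintype.card V₂ + s) v,
    fun u v h => hE u v h.1, ?_, ?_⟩
  · -- u side
    intro u
    set Lset : Finset V₂ := PCAux.lostSet s E' c (Fintype.card V₂ + s) u with hLset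
    set CG : Finset C := (Finset.univ.filter (fun v => E' u v)).image (fun v => c u v) with hCG
    set CH : Finset C := (Finset.univ.filter
      (fun v => E' u v ∧ c u v ∈ PCAux.proc s E' c (Fintype.card V₂ + s) v)).image
      (fun v => c u v) with hCH
    have hGset : (fun v => c u v) '' {v | E u v} = ↑CG := by
      rw [hcolors u, hCG]
      ext χ
      simp
    have hHset : (fun v => c u v) ''
        {v | E' u v ∧ c u v ∈ PCAux.proc s E' c (Fintype.card V₂ + s) v} = ↑CH := by
      rw [hCH]
      ext χ
      simp
    have hsub : ∀ χ ∈ CG \ CH, ∃ v, E' u v ∧ c u v = χ ∧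
        c u v ∉ PCAux.proc s E' c (Fintype.card V₂ + s) v := by
      intro χ hχ
      rw [Finset.mem_sdiff] at hχ
      obtain ⟨hχG, hχH⟩ := hχ
      rw [hCG] at hχG
      rcases Finset.mem_image.1 hχG with ⟨v, hvmem, rfl⟩
      rw [Finset.mem_filter] at hvmem
      refine ⟨v, hvmem.2, rfl, fun hin => hχH ?_⟩
      rw [hCH]
      exact Finset.mem_image.2 ⟨v, Finset.mem_filter.2 ⟨Finset.mem_univ _, hvmem.2, hin⟩, rfl⟩
    set f : C → V₂ := fun χ =>
      if h : ∃ v, E' u v ∧ c u v = χ ∧ c u v ∉ PCAux.proc s E' c (Fintype.card V₂ + s) v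
      then h.choose else Classical.arbitrary V₂ with hf
    have hfspec : ∀ χ ∈ CG \ CH, E' u (f χ) ∧ c u (f χ) = χ ∧
        c u (f χ) ∉ PCAux.proc s E' c (Fintype.card V₂ + s) (f χ) := by
      intro χ hχ
      have hex := hsub χ hχ
      rw [hf]
      simp only [dif_pos hex]
      exact hex.choose_spec
    have hmaps : ∀ χ ∈ CG \ CH, f χ ∈ Lset := by
      intro χ hχ
      have h1 := hfspec χ hχ
      rw [hLset, PCAux.mem_lostSet]
      exact ⟨h1.1, h1.2.2⟩
    have hfinj : Set.InjOn f ↑(CG \ CH) := by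
      intro χ hχ χ' hχ' heq
      have h1 := hfspec χ (Finset.mem_coe.1 hχ)
      have h2 := hfspec χ' (Finset.mem_coe.1 hχ')
      rw [← h1.2.1, ← h2.2.1, heq]
    have hinjcard : (CG \ CH).card ≤ Lset.card :=
      Finset.card_le_card_of_injOn f hmaps hfinj
    have hLbound : CG.card ≤ CH.card + Lset.card := by
      have := Finset.card_le_card_sdiff_add_card (s := CG) (t := CH)
      omega
    have hkey := PCAux.key_bound s t E E' c hs hst hinj hE hno u
    have hkey' : (s - 1).factorial * Lset.card ^ s ≤ (t - 1) * (s * Fintype.card V₂) ^ (s - 1) :=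
      hkey
    have hreal := PCAux.real_bound s t (Fintype.card V₂) Lset.card hs hst hkey'
    rw [hGset, hHset, Set.ncard_coe_finset, Set.ncard_coe_finset]
    have hc1 : (CG.card : ℝ) ≤ (CH.card : ℝ) + (Lset.card : ℝ) := by exact_mod_cast hLbound
    linarith
  · -- v side
    intro v
    have hsub : (fun u => c u v) ''
        {u | E' u v ∧ c u v ∈ PCAux.proc s E' c (Fintype.card V₂ + s) v}
        ⊆ ↑(PCAux.proc s E' c (Fintype.card V₂ + s) v) := by
      rintro χ ⟨u, hu, rfl⟩
      exact hu.2
    calc ((fun u => c u v) ''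
        {u | E' u v ∧ c u v ∈ PCAux.proc s E' c (Fintype.card V₂ + s) v}).ncard
        ≤ (↑(PCAux.proc s E' c (Fintype.card V₂ + s) v) : Set C).ncard :=
          Set.ncard_le_ncard hsub (Finset.finite_toSet _)
      _ = (PCAux.proc s E' c (Fintype.card V₂ + s) v).card := Set.ncard_coe_finset _
      _ ≤ s - 1 := PCAux.proc_card_le s E' c _ v
end

section
/- Let G = (V₁, V₂; E) be an edge-colored bipartite graph with |V₁| = n₁ and |V₂| = n₂, and let t ≥ s ≥ 2 be integers. If Σ_{v ∈ V(G)} d^c(v) > n₁n₂ + σ_{s,t}(n₁·n₂^{1−1/s} + n₂·n₁^{1−1/s}) + s(n₁ + n₂), where σ_{s,t} = s((t−1)/(s−1)!)^{1/s}, then G contains a properly colored K_{s,t}. -/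
/-!
Keep, at every vertex, one edge of each colour it sees. The edges kept by both of their ends form
a subgraph `F` in which the edges at any vertex have distinct colours, so every `K_{s,t}` inside
`F` is properly coloured; and since at most `n₁ n₂` edges are kept by only one end,
`|F| ≥ Σ d^c(v) - n₁ n₂ > σ_{s,t} n₂ n₁^{1-1/s} + (s - 1) n₁`. By convexity of `d ↦ C(d, s)`
(through `(d - (s - 1))^s ≤ s! C(d, s)` and the power mean inequality) this gives more than
`(t - 1) C(n₂, s)` stars `K_{1,s}` of `F` centred in `V₁`, so by pigeonhole some `s`-subset of
`V₂` has `t` common neighbours in `F`.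
-/

open Finset
open scoped Nat

section Coloring

variable {α β C : Type*}

lemma exists_rainbow_subrel (E : α → β → Prop) (c : α → β → C) :
    ∃ L : α → β → Prop, (∀ a b, L a b → E a b) ∧ (∀ a, Set.InjOn (c a) {b | L a b}) ∧
      ∀ a, {b | L a b}.ncard = ((fun b => c a b) '' {b | E a b}).ncard := by
  choose S hSE hS using fun a => Set.exists_subset_bijOn {b | E a b} (c a)
  exact ⟨fun a b => b ∈ S a, fun a _ hb => hSE a hb, fun a => (hS a).injOn,
    fun a => (hS a).image_eq ▸ ((hS a).injOn.ncard_image).symm⟩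

lemma ncard_setOf_eq_sum_ite [Fintype α] (p : α → Prop) [DecidablePred p] :
    {a | p a}.ncard = ∑ a, if p a then 1 else 0 := by
  rw [Set.ncard_eq_toFinset_card', Set.toFinset_ofPred, card_filter]

lemma exists_properlyColored_subrel [Fintype α] [Fintype β] (E : α → β → Prop)
    (c : α → β → C) :
    ∃ F : α → β → Prop, (∀ a b, F a b → E a b) ∧
      (∀ a b b', F a b → F a b' → c a b = c a b' → b = b') ∧
      (∀ a a' b, F a b → F a' b → c a b = c a' b → a = a') ∧
      ∑ a, ((fun b => c a b) '' {b | E a b}).ncard +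
          ∑ b, ((fun a => c a b) '' {a | E a b}).ncard ≤
        ∑ a, {b | F a b}.ncard + Fintype.card α * Fintype.card β := by
  classical
  obtain ⟨L, hLE, hLinj, hLcard⟩ := exists_rainbow_subrel E c
  obtain ⟨R, -, hRinj, hRcard⟩ : ∃ R : β → α → Prop, (∀ b a, R b a → E a b) ∧
      (∀ b, Set.InjOn (fun a => c a b) {a | R b a}) ∧
      ∀ b, {a | R b a}.ncard = ((fun a => c a b) '' {a | E a b}).ncard :=
    exists_rainbow_subrel (flip E) (flip c)
  refine ⟨fun a b => L a b ∧ R b a, fun a b h => hLE a b h.1,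
    fun a b b' h h' => @hLinj a b h.1 b' h'.1, fun a a' b h h' => @hRinj b a h.2 a' h'.2, ?_⟩
  simp only [← hLcard, ← hRcard, ncard_setOf_eq_sum_ite]
  rw [sum_comm (f := fun b a => if R b a then 1 else 0), ← sum_add_distrib,
    Fintype.card_eq_sum_ones (α := α), sum_mul, ← sum_add_distrib]
  refine sum_le_sum fun a _ => ?_
  rw [one_mul, Fintype.card_eq_sum_ones (α := β), ← sum_add_distrib, ← sum_add_distrib]
  exact sum_le_sum fun b _ => by split_ifs <;> simp_all

end Coloring

lemma exists_card_eq_lt_card_commonNeighbors {α β : Type*} [Fintype α] [Fintype β]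
    (F : α → β → Prop) [DecidableRel F] (k s : ℕ)
    (h : k * (Fintype.card β).choose s < ∑ a, (#{b | F a b}).choose s) :
    ∃ B : Finset β, #B = s ∧ k < #{a | ∀ b ∈ B, F a b} := by
  let r : α → Finset β → Prop := fun a B => ∀ b ∈ B, F a b
  have hdouble := sum_card_bipartiteAbove_eq_sum_card_bipartiteBelow
    (s := univ) (t := powersetCard s univ) r
  have habove : ∀ a, (powersetCard s univ).bipartiteAbove r a = powersetCard s {b | F a b} := by
    intro a
    ext B
    simp [r, bipartiteAbove, subset_iff, and_comm]
  simp only [habove, card_powersetCard] at hdouble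
  rw [hdouble, ← card_univ, ← card_powersetCard, mul_comm, ← smul_eq_mul, ← sum_const] at h
  obtain ⟨B, hB, hlt⟩ := exists_lt_of_sum_lt h
  exact ⟨B, (mem_powersetCard.1 hB).2, by simpa [r, bipartiteBelow] using hlt⟩

lemma sub_pred_pow_le_factorial_mul_choose (d s : ℕ) : (d - (s - 1)) ^ s ≤ s ! * d.choose s := by
  rw [← Nat.descFactorial_eq_factorial_mul_choose]
  rcases s with _ | s
  · simp
  · simpa using Nat.pow_sub_le_descFactorial d (s + 1)

lemma pow_lt_card_pow_mul_sum_choose {ι : Type*} [Fintype ι] (d : ι → ℕ) {s : ℕ} (hs : 1 ≤ s)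
    {x : ℝ} (hx : 0 ≤ x) (h : x + (s - 1) * Fintype.card ι < ∑ i, (d i : ℝ)) :
    x ^ s < Fintype.card ι ^ (s - 1) * (s ! * ∑ i, ((d i).choose s : ℝ)) := by
  set a : ι → ℝ := fun i => ((d i - (s - 1) : ℕ) : ℝ)
  have hda : ∀ i, (d i : ℝ) ≤ a i + (s - 1) := fun i => by
    have hs' : ((s - 1 : ℕ) : ℝ) = s - 1 := by rw [Nat.cast_sub hs, Nat.cast_one]
    simp only [a, ← hs']
    exact_mod_cast (le_tsub_add : d i ≤ d i - (s - 1) + (s - 1))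
  have hxa : x < ∑ i, a i := by
    have := sum_le_sum fun i (_ : i ∈ univ) => hda i
    rw [sum_add_distrib, sum_const, Finset.card_univ, nsmul_eq_mul] at this
    linarith
  obtain ⟨m, rfl⟩ : ∃ m, s = m + 1 := ⟨s - 1, by omega⟩
  calc x ^ (m + 1) < (∑ i, a i) ^ (m + 1) := by gcongr
    _ ≤ Fintype.card ι ^ m * ∑ i, a i ^ (m + 1) :=
        pow_sum_le_card_mul_sum_pow (fun i _ => Nat.cast_nonneg _) m
    _ ≤ _ := by
        rw [add_tsub_cancel_right]
        gcongr
        rw [mul_sum]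
        gcongr with i
        simp only [a, add_tsub_cancel_right]
        exact_mod_cast sub_pred_pow_le_factorial_mul_choose (d i) (m + 1)

lemma rpow_one_sub_inv_pow {x : ℝ} (hx : 0 ≤ x) {s : ℕ} (hs : 1 ≤ s) :
    (x ^ (1 - 1 / (s : ℝ))) ^ s = x ^ (s - 1) := by
  have hexp : (1 - 1 / (s : ℝ)) * s = ((s - 1 : ℕ) : ℝ) := by
    have : (s : ℝ) ≠ 0 := by positivity
    rw [Nat.cast_sub hs]
    field_simp
    simp
  rw [← Real.rpow_natCast, ← Real.rpow_mul hx, hexp, Real.rpow_natCast]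

lemma mul_choose_lt_sum_choose {α : Type*} [Fintype α] (d : α → ℕ) {m s k : ℕ} (hs : 1 ≤ s)
    {σ : ℝ} (hσ : 0 ≤ σ) (hk : (k : ℝ) ≤ σ ^ s)
    (h : σ * (m * (Fintype.card α : ℝ) ^ (1 - 1 / (s : ℝ))) + (s - 1) * Fintype.card α <
      ∑ a, (d a : ℝ)) :
    k * m.choose s < ∑ a, (d a).choose s := by
  set n : ℝ := (Fintype.card α : ℝ)
  have hchoose : (s ! : ℝ) * m.choose s ≤ m ^ s := by
    rw [mul_comm, ← le_div_iff₀ (by positivity)]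
    exact Nat.choose_le_pow_div s m
  have hlt := pow_lt_card_pow_mul_sum_choose d hs (by positivity) h
  rw [mul_pow, mul_pow, rpow_one_sub_inv_pow (by positivity) hs] at hlt
  have key : n ^ (s - 1) * s ! * (k * m.choose s) < n ^ (s - 1) * s ! * ∑ a, ((d a).choose s : ℝ) :=
    calc n ^ (s - 1) * s ! * (k * m.choose s) = n ^ (s - 1) * k * (s ! * m.choose s) := by ring
      _ ≤ n ^ (s - 1) * σ ^ s * m ^ s := by gcongr
      _ < _ := by linarith
  exact_mod_cast lt_of_mul_lt_mul_left key (by positivity)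

lemma le_mul_rpow_inv_div_factorial_pow {q : ℝ} (hq : 0 ≤ q) {s : ℕ} (hs : 1 ≤ s) :
    q ≤ ((s : ℝ) * (q / (s - 1)!) ^ ((1 : ℝ) / s)) ^ s := by
  have hfac : ((s - 1)! : ℝ) ≤ s ^ s := by
    exact_mod_cast (Nat.factorial_le (Nat.sub_le s 1)).trans (Nat.factorial_le_pow s)
  rw [mul_pow, ← Real.rpow_natCast (_ ^ _), ← Real.rpow_mul (by positivity),
    one_div_mul_cancel (by positivity), Real.rpow_one, mul_div_assoc', le_div_iff₀ (by positivity)]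
  nlinarith

/-- An edge-colored bipartite graph `G = (V₁, V₂; E)` with
`Σ_{v} d^c(v) > n₁n₂ + σ_{s,t}(n₁·n₂^{1-1/s} + n₂·n₁^{1-1/s}) + s(n₁ + n₂)`,
where `σ_{s,t} = s((t-1)/(s-1)!)^{1/s}`, contains a properly colored `K_{s,t}`. -/
theorem stmt_12 (n₁ n₂ s t : ℕ) (hs : 2 ≤ s) (hst : s ≤ t) {C : Type*}
    (E : Fin n₁ → Fin n₂ → Prop) (c : Fin n₁ → Fin n₂ → C)
    (hsum : (((∑ u : Fin n₁, ((fun v => c u v) '' {v | E u v}).ncard) +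
        (∑ v : Fin n₂, ((fun u => c u v) '' {u | E u v}).ncard) : ℕ) : ℝ) >
      (n₁ : ℝ) * n₂ +
        (s : ℝ) * (((t : ℝ) - 1) / (Nat.factorial (s - 1))) ^ ((1 : ℝ) / s) *
          ((n₁ : ℝ) * (n₂ : ℝ) ^ (1 - 1 / (s : ℝ)) + (n₂ : ℝ) * (n₁ : ℝ) ^ (1 - 1 / (s : ℝ))) +
        (s : ℝ) * ((n₁ : ℝ) + (n₂ : ℝ))) :
    ∃ (A : Finset (Fin n₁)) (B : Finset (Fin n₂)),
      ((A.card = s ∧ B.card = t) ∨ (A.card = t ∧ B.card = s)) ∧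
      (∀ a ∈ A, ∀ b ∈ B, E a b) ∧
      (∀ a ∈ A, ∀ b ∈ B, ∀ b' ∈ B, b ≠ b' → c a b ≠ c a b') ∧
      (∀ b ∈ B, ∀ a ∈ A, ∀ a' ∈ A, a ≠ a' → c a b ≠ c a' b) := by
  classical
  obtain ⟨F, hFE, hF_left, hF_right, hcount⟩ := exists_properlyColored_subrel E c
  have ht : (0 : ℝ) ≤ t - 1 := sub_nonneg.2 (by exact_mod_cast (by omega : 1 ≤ t))
  set σ := (s : ℝ) * (((t : ℝ) - 1) / (s - 1)!) ^ ((1 : ℝ) / s)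
  have hσ : 0 ≤ σ := by positivity
  have hdeg : σ * ((Fintype.card (Fin n₂) : ℝ) * (Fintype.card (Fin n₁) : ℝ) ^ (1 - 1 / (s : ℝ))) +
      (s - 1) * Fintype.card (Fin n₁) < ∑ u, ((#{v | F u v} : ℕ) : ℝ) := by
    simp only [ncard_setOf_eq_sum_ite, Fintype.card_fin] at hcount ⊢
    have : (0 : ℝ) ≤ σ * (n₁ * (n₂ : ℝ) ^ (1 - 1 / (s : ℝ))) := by positivity
    have : (0 : ℝ) ≤ s * n₂ := by positivity
    have := (Nat.cast_le (α := ℝ)).2 hcount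
    push_cast [card_filter] at this hsum ⊢
    linarith
  have hk : ((t - 1 : ℕ) : ℝ) ≤ σ ^ s := by
    rw [Nat.cast_sub (by omega), Nat.cast_one]
    exact le_mul_rpow_inv_div_factorial_pow ht (by omega)
  obtain ⟨B, hB, hcommon⟩ := exists_card_eq_lt_card_commonNeighbors F (t - 1) s
    (mul_choose_lt_sum_choose _ (by omega) hσ hk hdeg)
  obtain ⟨A, hA, hAcard⟩ := exists_subset_card_eq ((by omega : t ≤ t - 1 + 1).trans hcommon)
  have hF : ∀ a ∈ A, ∀ b ∈ B, F a b := fun a ha => by simpa using hA ha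
  exact ⟨A, B, Or.inr ⟨hAcard, hB⟩, fun a ha b hb => hFE a b (hF a ha b hb),
    fun a ha b hb b' hb' hne heq => hne (hF_left a b b' (hF a ha b hb) (hF a ha b' hb') heq),
    fun b hb a ha a' ha' hne heq => hne (hF_right a a' b (hF a ha b hb) (hF a' ha' b hb) heq)⟩
end

section
/- Let T be the transitive tournament on n vertices and (T, τ) its signature. Then Σ_{v ∈ V(T)} d^c_{(T,τ)}(v) = n(n+1)/2 − 1, and (T, τ) contains no properly colored K_{s,t} for any integers s ≥ 2 and t ≥ 3. -/
/-!
The colours `max v u` seen from `v` are exactly the vertices `w ≥ v` other than `0`: every `w > v`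
is reached through `u = w`, and `v` itself through `u = 0` unless `v = 0`. Summing `n - v` over `v` and discounting the missing colour at `0`
gives `n(n+1)/2 - 1`.

In a properly coloured `K_{s,t}` let `m` be the largest vertex. If `m` lies in one part, every edge
from `m` to the other part has colour `m`, so properness forces that other part to have at most one
vertex.
-/

open Finset

theorem image_max_ne_eq_Ici_sdiff_bot {α : Type*} [LinearOrder α] [OrderBot α] (v : α) :
    (fun u => max v u) '' {u | u ≠ v} = Set.Ici v \ {⊥} := by
  ext w
  simp only [Set.mem_image, Set.mem_ofPred_eq, Set.mem_sdiff, Set.mem_Ici, Set.mem_singleton_iff]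
  constructor
  · rintro ⟨u, hu, rfl⟩
    refine ⟨le_max_left v u, fun h => hu ?_⟩
    rw [_root_.max_eq_bot] at h
    rw [h.1, h.2]
  · rintro ⟨hvw, hw⟩
    rcases hvw.eq_or_lt with rfl | hvw
    · exact ⟨⊥, Ne.symm hw, max_eq_left bot_le⟩
    · exact ⟨w, hvw.ne', max_eq_right hvw.le⟩

theorem Fin.ncard_Ici_zero_sdiff_zero (n : ℕ) :
    (Set.Ici 0 \ {0} : Set (Fin (n + 1))).ncard = n := by
  rw [Set.ncard_sdiff_singleton_of_mem Set.self_mem_Ici, ← Finset.coe_Ici, Set.ncard_coe_finset,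
    Fin.card_Ici]
  simp

theorem Fin.ncard_Ici_succ_sdiff_zero {n : ℕ} (i : Fin n) :
    (Set.Ici i.succ \ {0} : Set (Fin (n + 1))).ncard = n - i := by
  rw [Set.sdiff_singleton_eq_self (by simp), ← Finset.coe_Ici, Set.ncard_coe_finset, Fin.card_Ici]
  simp

theorem Fin.sum_sub_val (n : ℕ) : ∑ i : Fin n, (n - i : ℕ) = n * (n + 1) / 2 := by
  rw [Fin.sum_univ_eq_sum_range (n - ·), ← Finset.sum_range_reflect,
    Finset.sum_congr rfl fun j hj => show n - (n - 1 - j) = j + 1 by simp at hj; omega,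
    ← Finset.sum_range_succ' (fun j => j) n |>.trans (add_zero _), Finset.sum_range_id, mul_comm]
  rfl

theorem Finset.card_le_one_of_max_injOn {α : Type*} [LinearOrder α] {B : Finset α} {m : α}
    (hm : ∀ b ∈ B, b ≤ m) (hinj : ∀ b ∈ B, ∀ b' ∈ B, b ≠ b' → max m b ≠ max m b') : #B ≤ 1 :=
  Finset.card_le_one.2 fun b hb b' hb' => by_contra fun hne =>
    hinj b hb b' hb' hne (by rw [max_eq_left (hm b hb), max_eq_left (hm b' hb')])

theorem Finset.card_le_one_or_card_le_one_of_max_proper {α : Type*} [LinearOrder α]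
    {A B : Finset α}
    (hA : ∀ a ∈ A, ∀ b ∈ B, ∀ b' ∈ B, b ≠ b' → max a b ≠ max a b')
    (hB : ∀ b ∈ B, ∀ a ∈ A, ∀ a' ∈ A, a ≠ a' → max a b ≠ max a' b) :
    #A ≤ 1 ∨ #B ≤ 1 := by
  rcases (A ∪ B).eq_empty_or_nonempty with hAB | hAB
  · simp_all
  have hle (x) (hx : x ∈ A ∪ B) : x ≤ (A ∪ B).max' hAB := (A ∪ B).le_max' x hx
  rcases Finset.mem_union.1 ((A ∪ B).max'_mem hAB) with hmA | hmB
  · exact .inr <| card_le_one_of_max_injOn (fun b hb => hle b (mem_union_right A hb)) (hA _ hmA)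
  · refine .inl <| card_le_one_of_max_injOn (fun a ha => hle a (mem_union_left B ha)) ?_
    simpa only [max_comm] using hB _ hmB

/-- For the signature of the transitive tournament on `n` vertices (the complete graph on
`Fin n` in which edge `{i, j}` gets color `max i j`), the sum of color degrees equals
`n(n+1)/2 - 1`, and it contains no properly colored `K_{s,t}` for any `s ≥ 2`, `t ≥ 3`. -/
theorem stmt_14 (n : ℕ) :
    (∑ v : Fin n, ((fun u => max v u) '' {u : Fin n | u ≠ v}).ncard)
        = n * (n + 1) / 2 - 1 ∧
      (∀ s t : ℕ, 2 ≤ s → 3 ≤ t →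
        ¬ ∃ (A B : Finset (Fin n)), Disjoint A B ∧ A.card = s ∧ B.card = t ∧
          (∀ a ∈ A, ∀ b ∈ B, ∀ b' ∈ B, b ≠ b' → max a b ≠ max a b') ∧
          (∀ b ∈ B, ∀ a ∈ A, ∀ a' ∈ A, a ≠ a' → max a b ≠ max a' b)) := by
  constructor
  · cases n with
    | zero => rfl
    | succ n =>
      simp only [image_max_ne_eq_Ici_sdiff_bot, bot_eq_zero, Fin.sum_univ_succ,
        Fin.ncard_Ici_zero_sdiff_zero, Fin.ncard_Ici_succ_sdiff_zero, Fin.sum_sub_val]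
      have : (n + 1) * (n + 1 + 1) = n * (n + 1) + 2 * (n + 1) := by ring
      omega
  · rintro s t hs ht ⟨A, B, -, rfl, rfl, hA, hB⟩
    have := card_le_one_or_card_le_one_of_max_proper hA hB
    omega
end

section
/- Let H be a bipartite graph with parts V₁ and V₂ where |V₁| = |V₂| = n, such that d(v⁽¹⁾) ≥ δ for every v⁽¹⁾ ∈ V₁ (where vertices of V₁ and V₂ are indexed by the same n-element set). Then Σ over edges v⁽¹⁾u⁽²⁾ of H of (d(v⁽²⁾) + d(u⁽²⁾)) ≥ δ·|E(H)| + |E(H)|²/n, where d(v⁽²⁾) denotes the degree of the V₂-copy of v. -/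
/-- Let `H` be a bipartite graph on two copies of an `n`-element index set, with
`E v u` meaning `v⁽¹⁾u⁽²⁾` is an edge. If every `v⁽¹⁾` has degree at least `δ`, then
`Σ_{v⁽¹⁾u⁽²⁾ ∈ E(H)} (d(v⁽²⁾) + d(u⁽²⁾)) ≥ δ·|E(H)| + |E(H)|²/n`. -/
theorem stmt_17 (n δ : ℕ) (E : Fin n → Fin n → Prop) [∀ v u, Decidable (E v u)]
    (hδ : ∀ v : Fin n, δ ≤ (Finset.univ.filter fun u => E v u).card) :
    (δ : ℝ) * (∑ v : Fin n, ((Finset.univ.filter fun u => E v u).card : ℝ)) +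
        (∑ v : Fin n, ((Finset.univ.filter fun u => E v u).card : ℝ)) ^ 2 / n ≤
      ∑ v : Fin n, ∑ u : Fin n,
        if E v u then
          ((Finset.univ.filter fun w => E w v).card : ℝ) +
            ((Finset.univ.filter fun w => E w u).card : ℝ)
        else 0 := by
  set d1 : Fin n → ℝ := fun v => ((Finset.univ.filter fun u => E v u).card : ℝ) with hd1
  set d2 : Fin n → ℝ := fun v => ((Finset.univ.filter fun w => E w v).card : ℝ) with hd2
  have hd1e : ∀ v, d1 v = ∑ u : Fin n, if E v u then (1 : ℝ) else 0 := by
    intro v; simp [hd1, Finset.sum_ite, Finset.sum_const]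
  have hd2e : ∀ u, d2 u = ∑ v : Fin n, if E v u then (1 : ℝ) else 0 := by
    intro u; simp [hd2, Finset.sum_ite, Finset.sum_const]
  have hsum : ∑ v : Fin n, d1 v = ∑ v : Fin n, d2 v := by
    simp_rw [hd1e, hd2e]
    rw [Finset.sum_comm]
  have hRHS : (∑ v : Fin n, ∑ u : Fin n,
      if E v u then d2 v + d2 u else 0)
      = ∑ v : Fin n, d1 v * d2 v + ∑ u : Fin n, d2 u * d2 u := by
    have : ∀ v u : Fin n, (if E v u then d2 v + d2 u else 0)
        = (if E v u then (1:ℝ) else 0) * d2 v + (if E v u then (1:ℝ) else 0) * d2 u := by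
      intro v u; split <;> ring
    simp_rw [this, Finset.sum_add_distrib]
    congr 1
    · refine Finset.sum_congr rfl fun v _ => ?_
      rw [← Finset.sum_mul, ← hd1e]
    · rw [Finset.sum_comm]
      refine Finset.sum_congr rfl fun u _ => ?_
      rw [← Finset.sum_mul, ← hd2e]
  rw [hsum, hRHS]
  gcongr
  · -- δ * Σ d2 ≤ Σ d1 * d2
    rw [Finset.mul_sum]
    refine Finset.sum_le_sum fun v _ => ?_
    have h1 : (δ : ℝ) ≤ d1 v := by simp only [hd1]; exact_mod_cast hδ v
    have h2 : (0 : ℝ) ≤ d2 v := by positivity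
    exact mul_le_mul_of_nonneg_right h1 h2
  · -- (Σ d2)^2 / n ≤ Σ d2^2
    rcases Nat.eq_zero_or_pos n with hn | hn
    · subst hn; simp
    rw [div_le_iff₀ (by positivity)]
    have := sq_sum_le_card_mul_sum_sq (s := (Finset.univ : Finset (Fin n))) (f := d2)
    simp only [Finset.card_univ, Fintype.card_fin] at this
    calc (∑ v : Fin n, d2 v) ^ 2 ≤ n * ∑ v : Fin n, d2 v ^ 2 := this
      _ = (∑ u : Fin n, d2 u * d2 u) * n := by rw [mul_comm]; simp_rw [← pow_two]
end
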